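/- arXiv:1810.01255 — 2 statements merged into one kernel-verified Lean document; each statement's English description precedes it below -/
import Mathlib

section
/- Let v₁, v₂ ∈ ℝ² be linearly independent and let Λ = {a·v₁ + b·v₂ : a, b ∈ ℤ} be the lattice they generate. Suppose ⋃_{p∈Λ} closedBall(p, 1) = ℝ² and suppose there exists w ∈ Λ with w ≠ 0 and ‖w‖ ≤ 1 (this is equivalent to each unit disk of the lattice family containing the centers of at least two other disks of the family). Then the lower density of the family of unit disks centered at the points of Λ satisfies liminf_{λ→∞} N_Λ(λ)·π/(4λ²) ≥ 2π/(2+√3). -/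
open Metric MeasureTheory Filter Real
open scoped ENNReal

noncomputable section

/-- The Euclidean plane. -/
abbrev Pt := EuclideanSpace ℝ (Fin 2)

/-- The open square `(−λ,λ) × (−λ,λ)`. -/
def openSquare (l : ℝ) : Set Pt := {p | |p 0| < l ∧ |p 1| < l}

/-- The lattice generated by `v₁` and `v₂`. -/
def lattice (v₁ v₂ : Pt) : Set Pt := {p | ∃ a b : ℤ, p = (a : ℝ) • v₁ + (b : ℝ) • v₂}

/-- `N_Λ(λ)`: the extended number of pairs `(a, b) ∈ ℤ × ℤ` such that the closed unit ball
centered at `a·v₁ + b·v₂` meets the open square `(−λ,λ) × (−λ,λ)`. -/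
def NcountLat (v₁ v₂ : Pt) (l : ℝ) : ℝ≥0∞ :=
  ({q : ℤ × ℤ |
    (closedBall ((q.1 : ℝ) • v₁ + (q.2 : ℝ) • v₂) 1 ∩ openSquare l).Nonempty}.encard : ℕ∞)

/-!
Let `ω` be the area form and `d = |ω(v₁, v₂)|` the covolume of the lattice. The translates of a
fundamental parallelogram by the lattice points of the square `(−λ, λ)²` cover the smaller square
`(−λ + ‖v₁‖ + ‖v₂‖, λ − ‖v₁‖ − ‖v₂‖)²`, so `N(λ) · d ≥ 4 (λ − ‖v₁‖ − ‖v₂‖)²` and the lower density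
is at least `π / d`. It remains to show `d ≤ 1 + √3 / 2`.

Divide the short lattice vector by the gcd of its coordinates to get a primitive vector `w` with
`s = ‖w‖ ≤ 1`, and complete it to a basis `(w, u)` of the lattice: the lattice then lies on the
lines parallel to `w` at heights `k h`, `k ∈ ℤ`, where `h = d / s`. If `h ≥ s / 2`, the point on the
perpendicular bisector of `0` and `w` that is equidistant from `0` and from the line at height `h`
is at distance at least `R = (h² + s² / 4) / (2 h)` from every lattice point, so the covering
forces `R ≤ 1`, i.e. `(h − 1)² ≤ 1 − s² / 4`. Hence `d = s h ≤ s + s √(1 − s² / 4) ≤ 1 + √3 / 2`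
(and if `h < s / 2`, then `d < 1 / 2`).
-/

open Module Topology

/-- In coordinates along and across a lattice row, `(s / 2 - m s - k t, y - k h)` is the offset
from the lattice point `m w + k u` to the point `(s / 2, y)`. -/
theorem sq_sub_le_sq_add_sq_of_int {s y h t : ℝ} (m k : ℤ) (hy : 0 ≤ y) (hyh : y ≤ h)
    (hR : (h - y) ^ 2 = s ^ 2 / 4 + y ^ 2) :
    (h - y) ^ 2 ≤ (s / 2 - m * s - k * t) ^ 2 + (y - k * h) ^ 2 := by
  rcases eq_or_ne k 0 with rfl | hk
  · have hm : (0 : ℝ) ≤ m * (m - 1) := by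
      rcases le_or_gt m 0 with hm | hm
      · have : (m : ℝ) ≤ 0 := by exact_mod_cast hm
        nlinarith
      · have : (1 : ℝ) ≤ m := by exact_mod_cast hm
        nlinarith
    simp only [Int.cast_zero, zero_mul, sub_zero]
    nlinarith [mul_nonneg (sq_nonneg s) hm]
  · have hky : h - y ≤ |y - k * h| := by
      rcases lt_or_gt_of_ne hk with hk | hk
      · have : (k : ℝ) ≤ -1 := by exact_mod_cast Int.le_sub_one_of_lt hk
        rw [le_abs]; left; nlinarith
      · have : (1 : ℝ) ≤ k := by exact_mod_cast hk
        rw [le_abs]; right; nlinarith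
    have := pow_le_pow_left₀ (sub_nonneg.2 hyh) hky 2
    rw [sq_abs] at this
    nlinarith [sq_nonneg (s / 2 - m * s - k * t)]

theorem mul_le_of_sq_add_sq_div_four_le {s h : ℝ} (hs : 0 ≤ s) (hs1 : s ≤ 1)
    (hsh : h ^ 2 + s ^ 2 / 4 ≤ 2 * h) : s * h ≤ (2 + √3) / 2 := by
  have h3 : √3 ^ 2 = 3 := Real.sq_sqrt (by norm_num)
  nlinarith [Real.sqrt_nonneg 3, mul_nonneg hs (sub_nonneg.2 hs1),
    sq_nonneg (s * (h - 1) - √3 / 2)]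

namespace ZSpan

variable {E ι : Type*} [NormedAddCommGroup E] [NormedSpace ℝ E] [Fintype ι]
  [MeasurableSpace E] [BorelSpace E]

theorem measure_le_encard_image_floor_mul (b : Basis ι ℝ E) (μ : Measure E)
    [μ.IsAddHaarMeasure] (A : Set E) :
    μ A ≤ ((fun x ↦ (floor b x : E)) '' A).encard * μ (fundamentalDomain b) := by
  set S := (fun x ↦ (floor b x : E)) '' A
  have hA : A ⊆ ⋃ z ∈ S, (fun x ↦ -z + x) ⁻¹' fundamentalDomain b := by
    intro x hx
    refine Set.mem_biUnion (Set.mem_image_of_mem _ hx) ?_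
    simpa [← sub_eq_neg_add, ← fract_apply] using fract_mem_fundamentalDomain b x
  rcases S.finite_or_infinite with hS | hS
  · calc μ A ≤ μ (⋃ z ∈ S, (fun x ↦ -z + x) ⁻¹' fundamentalDomain b) := measure_mono hA
      _ ≤ ∑' z : S, μ ((fun x ↦ -(z : E) + x) ⁻¹' fundamentalDomain b) :=
        measure_biUnion_le μ hS.countable _
      _ = S.encard * μ (fundamentalDomain b) := by
        simp only [measure_preimage_add, ENNReal.tsum_set_const]
  · rw [hS.encard_eq, ENat.toENNReal_top,
      ENNReal.top_mul (measure_fundamentalDomain_ne_zero b)]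
    exact le_top

end ZSpan

namespace Orientation

variable {E : Type*} [NormedAddCommGroup E] [InnerProductSpace ℝ E]

theorem volume_fundamentalDomain [FiniteDimensional ℝ E] [MeasurableSpace E] [BorelSpace E]
    {n : ℕ} [Fact (finrank ℝ E = n)] (o : Orientation ℝ E (Fin n)) (b : Basis (Fin n) ℝ E) :
    volume (ZSpan.fundamentalDomain b) = ENNReal.ofReal |o.volumeForm b| := by
  rw [measure_congr (ZSpan.fundamentalDomain_ae_parallelepiped b volume), ← o.measure_eq_volume,
    AlternatingMap.measure_parallelepiped]

variable [Fact (finrank ℝ E = 2)] (o : Orientation ℝ E (Fin 2))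

theorem volume_fundamentalDomain_two [FiniteDimensional ℝ E] [MeasurableSpace E] [BorelSpace E]
    (b : Basis (Fin 2) ℝ E) :
    volume (ZSpan.fundamentalDomain b) = ENNReal.ofReal |o.areaForm (b 0) (b 1)| := by
  have hb : ⇑b = ![b 0, b 1] := by ext i; fin_cases i <;> rfl
  rw [o.volume_fundamentalDomain, areaForm_to_volumeForm, hb]
  rfl

theorem areaForm_ne_zero_of_linearIndependent {v₁ v₂ : E}
    (h : LinearIndependent ℝ ![v₁, v₂]) : o.areaForm v₁ v₂ ≠ 0 := by
  let e := o.finOrthonormalBasis two_pos Fact.out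
  have hcard : Fintype.card (Fin 2) = finrank ℝ E :=
    (Fintype.card_fin 2).trans (Fact.out : finrank ℝ E = 2).symm
  rw [o.areaForm_to_volumeForm, ← coe_basisOfLinearIndependentOfCardEqFinrank h hcard,
    o.volumeForm_robust e (o.finOrthonormalBasis_orientation _ _)]
  exact (e.toBasis.isUnit_det _).ne_zero

theorem areaForm_smul_add_smul (v₁ v₂ : E) (a b c d : ℝ) :
    o.areaForm (a • v₁ + b • v₂) (c • v₁ + d • v₂) = (a * d - b * c) * o.areaForm v₁ v₂ := by
  simp only [map_add, map_smul, LinearMap.add_apply, LinearMap.smul_apply, areaForm_apply_self,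
    smul_eq_mul, o.areaForm_swap v₂ v₁]
  ring

theorem sq_add_le_of_forall_exists_dist_le {e u : E} (he : ‖e‖ = 1) {s : ℝ} (hs : 0 < s)
    (hsh : s ≤ 2 * o.areaForm e u)
    (hcover : ∀ x, ∃ m k : ℤ, dist x ((m : ℝ) • s • e + (k : ℝ) • u) ≤ 1) :
    o.areaForm e u ^ 2 + s ^ 2 / 4 ≤ 2 * o.areaForm e u := by
  set h := o.areaForm e u
  have hh : 0 < h := by linarith
  -- `y` makes the distance `h - y` to the row at height `h` equal to the distance to `0`
  set y := (h ^ 2 - s ^ 2 / 4) / (2 * h)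
  have hy : 2 * h * y = h ^ 2 - s ^ 2 / 4 := mul_div_cancel₀ _ (by positivity)
  obtain ⟨m, k, hdist⟩ := hcover ((s / 2) • e + y • o.rightAngleRotation e)
  set z := (s / 2) • e + y • o.rightAngleRotation e - ((m : ℝ) • s • e + (k : ℝ) • u)
  have hinner : inner ℝ e z = s / 2 - m * s - k * inner ℝ e u := by
    simp only [z, inner_sub_right, inner_add_right, inner_smul_right, real_inner_self_eq_norm_sq,
      he, one_pow, mul_one, inner_rightAngleRotation_right, areaForm_apply_self, neg_zero,
      mul_zero, add_zero]
    ring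
  have harea : o.areaForm e z = y - k * h := by
    simp [z, h, he]
  have hnorm : ‖z‖ ^ 2 = (s / 2 - m * s - k * inner ℝ e u) ^ 2 + (y - k * h) ^ 2 := by
    have := o.inner_sq_add_areaForm_sq e z
    rw [he, hinner, harea] at this
    linarith
  have hz : ‖z‖ ≤ 1 := by rwa [dist_eq_norm] at hdist
  have hy0 : 0 ≤ y := by nlinarith
  have hyh : y ≤ h := by nlinarith
  have hR := sq_sub_le_sq_add_sq_of_int (s := s) (h := h) (t := inner ℝ e u) m k hy0 hyh
    (by linear_combination -hy)
  rw [← hnorm] at hR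
  have : h - y ≤ 1 := by nlinarith [pow_le_one₀ (n := 2) (norm_nonneg z) hz]
  nlinarith

theorem areaForm_le_of_forall_exists_dist_le {w u : E} (hw0 : w ≠ 0) (hw : ‖w‖ ≤ 1)
    (hcover : ∀ x, ∃ m k : ℤ, dist x ((m : ℝ) • w + (k : ℝ) • u) ≤ 1) :
    o.areaForm w u ≤ (2 + √3) / 2 := by
  set s := ‖w‖
  have hs : 0 < s := norm_pos_iff.2 hw0
  have he : ‖s⁻¹ • w‖ = 1 := norm_smul_inv_norm hw0
  have hwe : w = s • s⁻¹ • w := (smul_inv_smul₀ hs.ne' w).symm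
  have hω : o.areaForm w u = s * o.areaForm (s⁻¹ • w) u := by
    conv_lhs => rw [hwe]
    simp
  rw [hω]
  rcases lt_or_ge (2 * o.areaForm (s⁻¹ • w) u) s with hsh | hsh
  · nlinarith [Real.sqrt_nonneg 3]
  · rw [hwe] at hcover
    exact mul_le_of_sq_add_sq_div_four_le hs.le hw
      (o.sq_add_le_of_forall_exists_dist_le he hs hsh hcover)

end Orientation

instance : Fact (finrank ℝ Pt = 2) := ⟨finrank_euclideanSpace_fin⟩

theorem lattice_neg_right (v₁ v₂ : Pt) : lattice v₁ (-v₂) = lattice v₁ v₂ := by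
  ext p
  constructor <;> rintro ⟨a, b, rfl⟩ <;> exact ⟨a, -b, by push_cast; module⟩

theorem lattice_subset_lattice_of_mul_sub_mul_eq_one (v₁ v₂ : Pt) {a b c d : ℤ}
    (h : a * d - b * c = 1) :
    lattice v₁ v₂ ⊆ lattice ((a : ℝ) • v₁ + (b : ℝ) • v₂) ((c : ℝ) • v₁ + (d : ℝ) • v₂) := by
  have hR : (a : ℝ) * d - b * c = 1 := by exact_mod_cast h
  rintro p ⟨α, β, rfl⟩
  refine ⟨α * d - β * c, β * a - α * b, ?_⟩
  push_cast
  match_scalars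
  · linear_combination -(α : ℝ) * hR
  · linear_combination -(β : ℝ) * hR

theorem exists_primitive_of_mem_lattice (o : Orientation ℝ Pt (Fin 2)) {v₁ v₂ w : Pt}
    (hw : w ∈ lattice v₁ v₂) (hw0 : w ≠ 0) :
    ∃ w' u : Pt, w' ≠ 0 ∧ ‖w'‖ ≤ ‖w‖ ∧ lattice v₁ v₂ ⊆ lattice w' u ∧
      o.areaForm w' u = |o.areaForm v₁ v₂| := by
  obtain ⟨a, b, rfl⟩ := hw
  have hab : 0 < Int.gcd a b := Int.gcd_pos_iff.2 (by contrapose! hw0; simp [hw0])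
  obtain ⟨g, a', b', hg, hcop, rfl, rfl⟩ := Int.exists_gcd_one' hab
  obtain ⟨d, c, hdc⟩ := Int.isCoprime_iff_gcd_eq_one.2 hcop
  set w' : Pt := (a' : ℝ) • v₁ + (b' : ℝ) • v₂
  set u : Pt := ((-c : ℤ) : ℝ) • v₁ + (d : ℝ) • v₂
  have hww' : ((a' * g : ℤ) : ℝ) • v₁ + ((b' * g : ℤ) : ℝ) • v₂ = (g : ℝ) • w' := by
    push_cast; module
  have hg1 : (1 : ℝ) ≤ g := by exact_mod_cast hg
  have hsub : lattice v₁ v₂ ⊆ lattice w' u :=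
    lattice_subset_lattice_of_mul_sub_mul_eq_one v₁ v₂ (by linear_combination hdc)
  have hω : o.areaForm w' u = o.areaForm v₁ v₂ := by
    rw [o.areaForm_smul_add_smul]
    have hdcR : (d : ℝ) * a' + c * b' = 1 := by exact_mod_cast hdc
    rw [show (a' : ℝ) * d - b' * ((-c : ℤ) : ℝ) = 1 by push_cast; linear_combination hdcR, one_mul]
  rw [hww'] at hw0 ⊢
  have hw'0 : w' ≠ 0 := fun h ↦ hw0 (by rw [h, smul_zero])
  have hnorm : ‖w'‖ ≤ ‖(g : ℝ) • w'‖ := by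
    rw [norm_smul, Real.norm_natCast]
    exact le_mul_of_one_le_left (norm_nonneg _) hg1
  rcases le_or_gt 0 (o.areaForm v₁ v₂) with hpos | hneg
  · exact ⟨w', u, hw'0, hnorm, hsub, by rw [hω, abs_of_nonneg hpos]⟩
  · refine ⟨w', -u, hw'0, hnorm, by rwa [lattice_neg_right], ?_⟩
    rw [map_neg, hω, abs_of_neg hneg]

theorem volume_openSquare {r : ℝ} (hr : 0 ≤ r) :
    volume (openSquare r) = ENNReal.ofReal (4 * r ^ 2) := by
  have hsq : openSquare r = (MeasurableEquiv.toLp 2 (Fin 2 → ℝ)).symm ⁻¹'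
      (Set.univ.pi fun _ ↦ Set.Ioo (-r) r) := by
    ext p
    simp [openSquare, Fin.forall_fin_two, abs_lt]
  rw [hsq, (EuclideanSpace.volume_preserving_symm_measurableEquiv_toLp (Fin 2)).measure_preimage
    (MeasurableSet.univ_pi fun _ ↦ measurableSet_Ioo).nullMeasurableSet, volume_pi,
    Measure.pi_pi, Fin.prod_univ_two, Real.volume_Ioo, ← ENNReal.ofReal_mul (by linarith)]
  ring_nf

theorem add_mem_openSquare {p q : Pt} {r d : ℝ} (hp : p ∈ openSquare r) (hq : ‖q‖ ≤ d) :
    p + q ∈ openSquare (r + d) := by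
  have hqi (i : Fin 2) : |q i| ≤ d := (PiLp.norm_apply_le q i).trans hq
  obtain ⟨h0, h1⟩ := hp
  refine ⟨?_, ?_⟩ <;> rw [PiLp.add_apply]
  · linarith [abs_add_le (p 0) (q 0), hqi 0]
  · linarith [abs_add_le (p 1) (q 1), hqi 1]

theorem ofReal_four_mul_sq_le_ncountLat_mul (o : Orientation ℝ Pt (Fin 2)) {v₁ v₂ : Pt}
    (hli : LinearIndependent ℝ ![v₁, v₂]) {l : ℝ} (hl : ‖v₁‖ + ‖v₂‖ ≤ l) :
    ENNReal.ofReal (4 * (l - (‖v₁‖ + ‖v₂‖)) ^ 2) ≤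
      NcountLat v₁ v₂ l * ENNReal.ofReal |o.areaForm v₁ v₂| := by
  let b := basisOfLinearIndependentOfCardEqFinrank hli (by simp)
  have hb : ⇑b = ![v₁, v₂] := coe_basisOfLinearIndependentOfCardEqFinrank _ _
  have hb0 : b 0 = v₁ := by simp [hb]
  have hb1 : b 1 = v₂ := by simp [hb]
  have hfloor (x : Pt) :
      (ZSpan.floor b x : Pt) = (⌊b.repr x 0⌋ : ℝ) • v₁ + (⌊b.repr x 1⌋ : ℝ) • v₂ := by
    simp [ZSpan.floor, Fin.sum_univ_two, hb, Int.cast_smul_eq_zsmul]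
  have himage : (fun x ↦ (ZSpan.floor b x : Pt)) '' openSquare (l - (‖v₁‖ + ‖v₂‖)) ⊆
      (fun q : ℤ × ℤ ↦ (q.1 : ℝ) • v₁ + (q.2 : ℝ) • v₂) ''
        {q | (closedBall ((q.1 : ℝ) • v₁ + (q.2 : ℝ) • v₂) 1 ∩ openSquare l).Nonempty} := by
    rintro _ ⟨x, hx, rfl⟩
    refine ⟨(⌊b.repr x 0⌋, ⌊b.repr x 1⌋), ⟨_, mem_closedBall_self zero_le_one, ?_⟩,
      (hfloor x).symm⟩
    have hfract : ‖-ZSpan.fract b x‖ ≤ ‖v₁‖ + ‖v₂‖ := by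
      simpa [Fin.sum_univ_two, hb] using ZSpan.norm_fract_le b x
    simpa [← hfloor, ZSpan.fract_apply, ← sub_eq_add_neg] using add_mem_openSquare hx hfract
  calc ENNReal.ofReal (4 * (l - (‖v₁‖ + ‖v₂‖)) ^ 2)
      = volume (openSquare (l - (‖v₁‖ + ‖v₂‖))) := (volume_openSquare (sub_nonneg.2 hl)).symm
    _ ≤ ((fun x ↦ (ZSpan.floor b x : Pt)) '' openSquare (l - (‖v₁‖ + ‖v₂‖))).encard *
          volume (ZSpan.fundamentalDomain b) := ZSpan.measure_le_encard_image_floor_mul b _ _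
    _ ≤ NcountLat v₁ v₂ l * ENNReal.ofReal |o.areaForm v₁ v₂| := by
      rw [o.volume_fundamentalDomain_two, hb0, hb1]
      gcongr
      exact ENat.toENNReal_le.2 ((Set.encard_mono himage).trans (Set.encard_image_le _ _))

theorem ofReal_div_le_liminf {N : ℝ → ℝ≥0∞} {c d D : ℝ} (hd : 0 < d)
    (hN : ∀ l, D ≤ l → ENNReal.ofReal (4 * (l - D) ^ 2) ≤ N l * ENNReal.ofReal d) :
    ENNReal.ofReal (c / d) ≤
      liminf (fun l ↦ N l * ENNReal.ofReal c / ENNReal.ofReal (4 * l ^ 2)) atTop := by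
  have htend : Tendsto (fun l ↦ ENNReal.ofReal (c / d * (1 - D / l) ^ 2)) atTop
      (𝓝 (ENNReal.ofReal (c / d))) := by
    have : Tendsto (fun l : ℝ ↦ c / d * (1 - D / l) ^ 2) atTop (𝓝 (c / d * (1 - 0) ^ 2)) :=
      tendsto_const_nhds.mul
        ((tendsto_const_nhds.sub (tendsto_const_nhds.div_atTop tendsto_id)).pow 2)
    simpa using ENNReal.tendsto_ofReal this
  refine htend.liminf_eq.ge.trans (liminf_le_liminf ?_)
  filter_upwards [eventually_ge_atTop D, eventually_gt_atTop 0] with l hlD hl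
  rw [ENNReal.le_div_iff_mul_le (.inl (ENNReal.ofReal_pos.2 (by positivity)).ne')
    (.inl ENNReal.ofReal_ne_top)]
  calc ENNReal.ofReal (c / d * (1 - D / l) ^ 2) * ENNReal.ofReal (4 * l ^ 2)
      = ENNReal.ofReal (4 * (l - D) ^ 2) * ENNReal.ofReal (c / d) := by
        rw [← ENNReal.ofReal_mul' (by positivity), ← ENNReal.ofReal_mul (by positivity)]
        congr 1
        field_simp
    _ ≤ N l * ENNReal.ofReal d * ENNReal.ofReal (c / d) := by gcongr; exact hN l hlD
    _ = N l * ENNReal.ofReal c := by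
        rw [mul_assoc, ← ENNReal.ofReal_mul hd.le, mul_div_cancel₀ _ hd.ne']

/-- For a lattice covering of the plane by unit disks such that some nonzero lattice vector has
norm at most 1 (i.e. each disk contains the centers of at least two other disks), the lower
density is at least `2π/(2+√3)`. -/
theorem lattice_lower_density_ge (v₁ v₂ : Pt)
    (hli : LinearIndependent ℝ ![v₁, v₂])
    (hcover : (⋃ p ∈ lattice v₁ v₂, closedBall p 1) = Set.univ)
    (hshort : ∃ w ∈ lattice v₁ v₂, w ≠ 0 ∧ ‖w‖ ≤ 1) :
    ENNReal.ofReal (2 * π / (2 + Real.sqrt 3)) ≤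
      Filter.liminf
        (fun l : ℝ => NcountLat v₁ v₂ l * ENNReal.ofReal π / ENNReal.ofReal (4 * l ^ 2))
        Filter.atTop := by
  let o : Orientation ℝ Pt (Fin 2) := (EuclideanSpace.basisFun (Fin 2) ℝ).toBasis.orientation
  obtain ⟨w, hwΛ, hw0, hw1⟩ := hshort
  obtain ⟨w', u, hw'0, hw'w, hsub, hω⟩ := exists_primitive_of_mem_lattice o hwΛ hw0
  have hcover' (x : Pt) : ∃ m k : ℤ, dist x ((m : ℝ) • w' + (k : ℝ) • u) ≤ 1 := by
    obtain ⟨p, hp, hx⟩ := Set.mem_iUnion₂.1 (hcover ▸ Set.mem_univ x)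
    obtain ⟨m, k, rfl⟩ := hsub hp
    exact ⟨m, k, hx⟩
  have hle : |o.areaForm v₁ v₂| ≤ (2 + √3) / 2 :=
    hω ▸ o.areaForm_le_of_forall_exists_dist_le hw'0 (hw'w.trans hw1) hcover'
  have hpos : 0 < |o.areaForm v₁ v₂| := abs_pos.2 (o.areaForm_ne_zero_of_linearIndependent hli)
  calc ENNReal.ofReal (2 * π / (2 + √3)) ≤ ENNReal.ofReal (π / |o.areaForm v₁ v₂|) := by
        apply ENNReal.ofReal_le_ofReal
        rw [show 2 * π / (2 + √3) = π / ((2 + √3) / 2) by field_simp]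
        exact div_le_div_of_nonneg_left pi_pos.le hpos hle
    _ ≤ _ := ofReal_div_le_liminf hpos fun l hl ↦ ofReal_four_mul_sq_le_ncountLat_mul o hli hl
end
end

section
/- Let Π ⊆ ℝ² be a convex polytope (the convex hull of a finite set) and let C₁, …, C_N ∈ ℝ² be pairwise distinct points such that Π ⊆ ⋃ₙ closedBall(Cₙ, 1). Then there exist sets P₁, …, P_N ⊆ ℝ², each of which is a convex polytope (the convex hull of a finite set, possibly the empty set), such that: (i) Pₙ ⊆ closedBall(Cₙ, 1) for every n; (ii) ⋃ₙ Pₙ = Π; and (iii) interior(Pₙ) ∩ interior(Pₘ) = ∅ whenever n ≠ m. -/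
/-!
Take for the piece of the center `Cₙ` the part of `Π` lying in its Voronoi cell, the set of
points at least as close to `Cₙ` as to every other center. A point of `Π` lies in some disk, hence
its nearest center is at distance at most `1`; two cells meet only on the perpendicular bisector
of their centers, which has empty interior. Each cell is an intersection of finitely many
half-planes, and cutting a polytope `conv F` by a half-space `{f ≤ c}` gives the polytope spanned
by the points of `F` below the level `c` and the points where the segments from those to the
points of `F` above the level cross it.
-/

open Metric

noncomputable section

def IsPolytope (𝕜 : Type*) {E : Type*} [Field 𝕜] [LinearOrder 𝕜] [IsStrictOrderedRing 𝕜]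
    [AddCommGroup E] [Module 𝕜 E] (s : Set E) : Prop :=
  ∃ G : Finset E, s = convexHull 𝕜 (G : Set E)

section Polytope

variable {𝕜 E : Type*} [Field 𝕜] [AddCommGroup E] [Module 𝕜 E] (f : E →ₗ[𝕜] 𝕜) (c : 𝕜)

/-- The point where the line through `x` and `y` meets the level set `{f = c}`; it is `0` when
`f x = f y`. -/
def levelPoint (x y : E) : E :=
  ((f y - c) / (f y - f x)) • x + ((c - f x) / (f y - f x)) • y

lemma levelPoint_comm (x y : E) : levelPoint f c x y = levelPoint f c y x := by
  rw [levelPoint, levelPoint, add_comm, ← neg_div_neg_eq (f y - c), ← neg_div_neg_eq (c - f x)]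
  simp only [neg_sub]

lemma levelPoint_neg : levelPoint (-f) (-c) = levelPoint f c := by
  ext x y
  simp only [levelPoint, LinearMap.neg_apply]
  rw [← neg_div_neg_eq (f y - c), ← neg_div_neg_eq (c - f x)]
  congr 3 <;> ring

lemma apply_levelPoint {x y : E} (h : f x ≠ f y) : f (levelPoint f c x y) = c := by
  have : f y - f x ≠ 0 := sub_ne_zero.mpr h.symm
  simp only [levelPoint, map_add, map_smul, smul_eq_mul]
  field_simp
  ring

variable [LinearOrder 𝕜] [IsStrictOrderedRing 𝕜]

lemma levelPoint_mem_segment {x y : E} (hx : f x ≤ c) (hy : c < f y) :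
    levelPoint f c x y ∈ segment 𝕜 x y := by
  have : 0 < f y - f x := by linarith
  refine ⟨_, _, div_nonneg (by linarith) this.le, div_nonneg (by linarith) this.le, ?_, rfl⟩
  field_simp
  ring

variable {f c}

lemma mem_segment_levelPoint {x a b : E} (hx : x ∈ segment 𝕜 a b) (ha : f a ≤ c) (hb : c < f b)
    (hxc : f x ≤ c) : x ∈ segment 𝕜 a (levelPoint f c a b) := by
  have hab : 0 < f b - f a := by linarith
  have hlevel : levelPoint f c a b = a + ((c - f a) / (f b - f a)) • (b - a) := by
    rw [levelPoint, smul_sub, ← sub_eq_zero]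
    have : (f b - c) / (f b - f a) = 1 - (c - f a) / (f b - f a) := by field_simp; ring
    rw [this]
    module
  rw [segment_eq_image'] at hx
  obtain ⟨θ, ⟨hθ₀, -⟩, rfl⟩ := hx
  have hθ : θ * (f b - f a) ≤ c - f a := by
    simp only [map_add, map_smul, map_sub, smul_eq_mul] at hxc
    linarith
  rcases hθ₀.eq_or_lt with rfl | hθ₀
  · simp [left_mem_segment]
  have hs : 0 < c - f a := lt_of_lt_of_le (by positivity) hθ
  rw [segment_eq_image', hlevel]
  refine ⟨θ * (f b - f a) / (c - f a), ⟨by positivity, (div_le_one hs).mpr hθ⟩, ?_⟩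
  simp only [add_sub_cancel_left, smul_smul]
  congr 2
  field_simp

lemma levelPoint_mem_convexHull_image {T : Finset E} {p y : E} (hT : ∀ t ∈ T, f t < f p)
    (hy : y ∈ convexHull 𝕜 (T : Set E)) :
    levelPoint f c y p ∈ convexHull 𝕜 ((fun t => levelPoint f c t p) '' T) := by
  have hfy_lt : f y < f p :=
    convexHull_min hT (convex_halfSpace_lt f.isLinear (f p)) hy
  obtain ⟨w, hw₀, hw₁, rfl⟩ := Finset.mem_convexHull'.mp hy
  -- Projecting from `p` onto `{f = c}` reweights the point `t` by `w t * (f p - f t)`.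
  set D := f p - f (∑ t ∈ T, w t • t)
  have hD : 0 < D := sub_pos.mpr hfy_lt
  have hf_sum : f (∑ t ∈ T, w t • t) = ∑ t ∈ T, w t * f t := by simp
  have hterm : ∀ t ∈ T, (w t * (f p - f t) / D) • levelPoint f c t p
      = ((f p - c) / D) • (w t • t) + (w t * (c - f t) / D) • p := by
    intro t ht
    have : f p - f t ≠ 0 := (sub_pos.mpr (hT t ht)).ne'
    simp only [levelPoint, smul_add, smul_smul]
    congr 2 <;> field_simp
  have hsum : ∑ t ∈ T, w t * (f p - f t) / D = 1 := by
    rw [← Finset.sum_div, div_eq_one_iff_eq hD.ne']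
    simp only [D, hf_sum, mul_sub, Finset.sum_sub_distrib, ← Finset.sum_mul, hw₁, one_mul]
  have hcomb : ∑ t ∈ T, (w t * (f p - f t) / D) • levelPoint f c t p
      = levelPoint f c (∑ t ∈ T, w t • t) p := by
    rw [Finset.sum_congr rfl hterm, Finset.sum_add_distrib, ← Finset.smul_sum, ← Finset.sum_smul,
      ← Finset.sum_div, levelPoint]
    congr 3
    simp only [hf_sum, mul_sub, Finset.sum_sub_distrib, ← Finset.sum_mul, hw₁, one_mul]
  rw [← hcomb]
  refine (convex_convexHull 𝕜 _).sum_mem (fun t ht => ?_) hsum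
    (fun t ht => subset_convexHull 𝕜 _ ⟨t, ht, rfl⟩)
  have := hT t ht
  exact div_nonneg (mul_nonneg (hw₀ t ht) (by linarith)) hD.le

lemma levelPoint_mem_convexHull_image2 {A B : Finset E} (hA : ∀ a ∈ A, f a ≤ c)
    (hB : ∀ b ∈ B, c < f b) {a b : E} (ha : a ∈ convexHull 𝕜 (A : Set E))
    (hb : b ∈ convexHull 𝕜 (B : Set E)) :
    levelPoint f c a b ∈ convexHull 𝕜 (Set.image2 (levelPoint f c) A B) := by
  have hfa : f a ≤ c := convexHull_min hA (convex_halfSpace_le f.isLinear c) ha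
  have hvertex : ∀ b' ∈ B, levelPoint f c a b' ∈ convexHull 𝕜 (Set.image2 (levelPoint f c) A B) :=
    fun b' hb' => convexHull_mono (Set.image_subset_image2_left hb')
      (levelPoint_mem_convexHull_image (fun t ht => (hA t ht).trans_lt (hB b' hb')) ha)
  -- Project from `a`: for `-f` the point `a` lies above all of `B`.
  have hcut := levelPoint_mem_convexHull_image (f := -f) (c := -c) (p := a)
    (fun t ht => neg_lt_neg (hfa.trans_lt (hB t ht))) hb
  rw [levelPoint_neg, levelPoint_comm] at hcut
  refine convexHull_min ?_ (convex_convexHull 𝕜 _) hcut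
  rintro _ ⟨b', hb', rfl⟩
  show levelPoint f c b' a ∈ _
  rw [levelPoint_comm]
  exact hvertex b' hb'

lemma isPolytope_convexHull (F : Finset E) : IsPolytope 𝕜 (convexHull 𝕜 (F : Set E)) := ⟨F, rfl⟩

theorem IsPolytope.inter_halfSpace {s : Set E} (hs : IsPolytope 𝕜 s) (f : E →ₗ[𝕜] 𝕜) (c : 𝕜) :
    IsPolytope 𝕜 (s ∩ {x | f x ≤ c}) := by
  classical
  obtain ⟨F, rfl⟩ := hs
  have hF : (F : Set E) = ↑(F.filter (f · ≤ c)) ∪ ↑(F.filter (¬ f · ≤ c)) := by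
    rw [← Finset.coe_union, Finset.filter_union_filter_not_eq]
  set A := F.filter (f · ≤ c)
  set B := F.filter (¬ f · ≤ c)
  have hA : ∀ a ∈ A, f a ≤ c := fun a ha => (Finset.mem_filter.mp ha).2
  have hB : ∀ b ∈ B, c < f b := fun b hb => not_le.mp (Finset.mem_filter.mp hb).2
  refine ⟨A ∪ Finset.image₂ (levelPoint f c) A B, subset_antisymm ?_ ?_⟩
  · rintro x ⟨hx, hxc : f x ≤ c⟩
    rw [Finset.coe_union, Finset.coe_image₂]
    rw [hF] at hx
    rcases B.eq_empty_or_nonempty with hB0 | hBne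
    · rw [hB0, Finset.coe_empty, Set.union_empty] at hx
      exact convexHull_mono Set.subset_union_left hx
    rcases A.eq_empty_or_nonempty with hA0 | hAne
    · rw [hA0, Finset.coe_empty, Set.empty_union] at hx
      exact absurd (convexHull_min hB (convex_halfSpace_gt f.isLinear c) hx) hxc.not_gt
    rw [convexHull_union (Finset.coe_nonempty.mpr hAne) (Finset.coe_nonempty.mpr hBne),
      mem_convexJoin] at hx
    obtain ⟨a, ha, b, hb, hxab⟩ := hx
    have hfa : f a ≤ c := convexHull_min hA (convex_halfSpace_le f.isLinear c) ha
    have hfb : c < f b := convexHull_min hB (convex_halfSpace_gt f.isLinear c) hb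
    exact (convex_convexHull 𝕜 _).segment_subset (convexHull_mono Set.subset_union_left ha)
      (convexHull_mono Set.subset_union_right (levelPoint_mem_convexHull_image2 hA hB ha hb))
      (mem_segment_levelPoint hxab hfa hfb hxc)
  · refine convexHull_min ?_ ((convex_convexHull 𝕜 _).inter (convex_halfSpace_le f.isLinear c))
    rw [Finset.coe_union, Finset.coe_image₂]
    rintro _ (ha | ⟨a, ha, b, hb, rfl⟩)
    · exact ⟨subset_convexHull 𝕜 _ (Finset.mem_filter.mp ha).1, hA _ ha⟩
    · exact ⟨segment_subset_convexHull (Finset.mem_filter.mp ha).1 (Finset.mem_filter.mp hb).1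
        (levelPoint_mem_segment f c (hA a ha) (hB b hb)),
        (apply_levelPoint f c ((hA a ha).trans_lt (hB b hb)).ne).le⟩

theorem IsPolytope.inter_iInter_halfSpace {ι : Type*} [Finite ι] {s : Set E}
    (hs : IsPolytope 𝕜 s) (f : ι → E →ₗ[𝕜] 𝕜) (c : ι → 𝕜) :
    IsPolytope 𝕜 (s ∩ ⋂ i, {x | f i x ≤ c i}) := by
  classical
  have := Fintype.ofFinite ι
  suffices ∀ (T : Finset ι) (s : Set E), IsPolytope 𝕜 s →
      IsPolytope 𝕜 (s ∩ ⋂ i ∈ T, {x | f i x ≤ c i}) by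
    simpa using this Finset.univ s hs
  intro T
  induction T using Finset.induction_on with
  | empty => simp
  | insert i T _ ih =>
    intro s hs
    rw [Finset.set_biInter_insert, ← Set.inter_assoc]
    exact ih _ (hs.inter_halfSpace (f i) (c i))

end Polytope

section Voronoi

variable {ι E : Type*}

def voronoiCell [Dist E] (C : ι → E) (n : ι) : Set E :=
  {x | ∀ m, dist x (C n) ≤ dist x (C m)}

lemma exists_mem_voronoiCell [Dist E] [Finite ι] [Nonempty ι] (C : ι → E) (x : E) :
    ∃ n, x ∈ voronoiCell C n :=
  Finite.exists_min fun m => dist x (C m)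

variable [NormedAddCommGroup E] [InnerProductSpace ℝ E]

lemma dist_le_dist_iff_inner_le (x p q : E) :
    dist x p ≤ dist x q ↔ inner ℝ (q - p) x ≤ (‖q‖ ^ 2 - ‖p‖ ^ 2) / 2 := by
  rw [← pow_le_pow_iff_left₀ dist_nonneg dist_nonneg two_ne_zero, dist_eq_norm, dist_eq_norm,
    norm_sub_sq_real, norm_sub_sq_real, inner_sub_left, real_inner_comm x p, real_inner_comm x q]
  constructor <;> intro h <;> linarith

lemma voronoiCell_eq_iInter_halfSpace (C : ι → E) (n : ι) :
    voronoiCell C n = ⋂ m, {x | innerₛₗ ℝ (C m - C n) x ≤ (‖C m‖ ^ 2 - ‖C n‖ ^ 2) / 2} := by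
  ext x
  simp only [voronoiCell, Set.mem_ofPred_eq, Set.mem_iInter, innerₛₗ_apply_apply,
    dist_le_dist_iff_inner_le]

lemma interior_perpBisector {p q : E} (h : p ≠ q) :
    interior (AffineSubspace.perpBisector p q : Set E) = ∅ := by
  by_contra hne
  have htop := isOpen_interior.affineSpan_eq_top (Set.nonempty_iff_ne_empty.mpr hne)
  refine h (AffineSubspace.perpBisector_eq_top.mp (top_unique ?_))
  rw [← htop]
  exact affineSpan_le.mpr interior_subset

lemma disjoint_interior_voronoiCell {C : ι → E} {n m : ι} (h : C n ≠ C m) :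
    Disjoint (interior (voronoiCell C n)) (interior (voronoiCell C m)) := by
  rw [Set.disjoint_iff_inter_eq_empty, ← interior_inter, ← Set.subset_empty_iff,
    ← interior_perpBisector h]
  exact interior_mono fun x hx =>
    AffineSubspace.mem_perpBisector_iff_dist_eq.mpr ((hx.1 m).antisymm (hx.2 n))

end Voronoi

/-- Voronoi-cell decomposition: a convex polytope covered by finitely many unit disks with
pairwise distinct centers can be partitioned into convex polytopes, one inside each disk, with
pairwise disjoint interiors. -/
theorem voronoi_decomposition (F : Finset Pt) (N : ℕ) (C : Fin N → Pt)
    (hinj : Function.Injective C)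
    (hcover : convexHull ℝ (F : Set Pt) ⊆ ⋃ i, closedBall (C i) 1) :
    ∃ P : Fin N → Set Pt,
      (∀ n, ∃ G : Finset Pt, P n = convexHull ℝ (G : Set Pt)) ∧
      (∀ n, P n ⊆ closedBall (C n) 1) ∧
      (⋃ n, P n) = convexHull ℝ (F : Set Pt) ∧
      (∀ n m, n ≠ m → interior (P n) ∩ interior (P m) = ∅) := by
  refine ⟨fun n => convexHull ℝ F ∩ voronoiCell C n, fun n => ?_, fun n => ?_, ?_,
    fun n m hnm => ?_⟩
  · dsimp only
    rw [voronoiCell_eq_iInter_halfSpace]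
    exact (isPolytope_convexHull F).inter_iInter_halfSpace _ _
  · rintro x ⟨hx, hxn⟩
    obtain ⟨_, ⟨m, rfl⟩, hxm⟩ := hcover hx
    exact (hxn m).trans hxm
  · rw [← Set.inter_iUnion, Set.inter_eq_left]
    intro x hx
    obtain ⟨_, ⟨i, -⟩, -⟩ := hcover hx
    have : Nonempty (Fin N) := ⟨i⟩
    exact Set.mem_iUnion.mpr (exists_mem_voronoiCell C x)
  · rw [← Set.disjoint_iff_inter_eq_empty]
    exact (disjoint_interior_voronoiCell (hinj.ne hnm)).mono
      (interior_mono Set.inter_subset_right) (interior_mono Set.inter_subset_right)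
end
end
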